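/- Define the function δ on 1-round views (a,b,c) ∈ {1,2,3}³ with a ≠ b, b ≠ c, with fixed pairwise distinct colors x, y, z ∈ {1,2,3}, by δ(a,b,c) = 1 if b = x or (a,b,c) = (z,y,z), and δ(a,b,c) = 0 if b = z or (b = y and (a,c) ≠ (z,z)). Then for every pair of views v = (a,b,c) and v' = (b,c,d) arising as consecutive views (i.e., a ≠ b, b ≠ c, c ≠ d), it is not the case that δ(v) = 1 and δ(v') = 1. -/
import Mathlib


def Col : Set ℕ := {1, 2, 3}

/-- The 1-round map of Eq. (1): output 1 iff own color is `x`, or the view is `(z,y,z)`. -/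
def delta18 (x y z a b c : ℕ) : Fin 2 :=
  if b = x ∨ (a = z ∧ b = y ∧ c = z) then 1 else 0

theorem stmt18 :
    ∀ x y z : ℕ, x ∈ Col → y ∈ Col → z ∈ Col → x ≠ y → y ≠ z → x ≠ z →
      ∀ a b c d : ℕ, a ∈ Col → b ∈ Col → c ∈ Col → d ∈ Col →
        a ≠ b → b ≠ c → c ≠ d →
        ¬ (delta18 x y z a b c = 1 ∧ delta18 x y z b c d = 1) := by
  rintro x y z _ _ _ hxy hyz hxz a b c d _ _ _ _ hab hbc hcd ⟨h1, h2⟩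
  simp only [delta18] at h1 h2
  split_ifs at h1 h2 with p1 p2 <;> try simp_all
  rcases p1 with hb | ⟨ha, hb, hc⟩ <;> rcases p2 with hc' | ⟨hb', hc', hd⟩ <;> simp_all
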